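/- arXiv:1501.03764 — 3 statements merged into one kernel-verified Lean document; each statement's English description precedes it below -/
import Mathlib

section
/- Let F ⊆ ℝ^d be the attractor of a self-similar system S = {S_1, …, S_N}, N ≥ 2, satisfying the open set condition, and suppose the Minkowski dimension of F equals d. Then F is Minkowski measurable of dimension d with Minkowski content M_d(F) = λ_d(F) > 0. -/
open MeasureTheory Filter Set Topology

/-- `Euc d` is Euclidean space `ℝ^d`. -/
abbrev Euc (d : ℕ) : Type := EuclideanSpace ℝ (Fin d)

/-- The `ε`-parallel set `A_ε = {x : dist(x,A) ≤ ε}`. -/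
def pSet {d : ℕ} (A : Set (Euc d)) (ε : ℝ) : Set (Euc d) :=
  {x | Metric.infDist x A ≤ ε}

/-!
The parallel volumes `λ_d(F_ε)` decrease to `λ_d(F)` because `F` is compact, so the content is
`λ_d(F)` and only `λ_d(F) > 0` needs proof. Put `q = ∑ r_i^d`. Since `F_{ρε} ⊆ ⋃ S_i(F_ε)` for
`ρ = min r_i`, we get `λ_d(F_{ρⁿ}) ≤ qⁿ λ_d(F_1)`, and `dim_M F = d` then forces `q ≥ 1`.
The Hutchinson operator `A ↦ ⋃ S_i(A)` multiplies the volume of every open `A ⊆ O` by `q ≥ 1`,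
the images being disjoint, while its `n`-th iterate maps `F_c` into `F_{(max r_i)ⁿ c}`. Starting
from a bounded open piece of `O`, the volume of that piece is therefore a lower bound for `λ_d(F)`.
-/

open Metric Module Pointwise RealInnerProductSpace

section MetricSimilarity

variable {X : Type*} [MetricSpace X] {S : X → X} {r : ℝ}

theorem edist_eq_mul_of_dist_eq_mul (hr : 0 ≤ r) (hS : ∀ x y, dist (S x) (S y) = r * dist x y)
    (x y : X) : edist (S x) (S y) = ENNReal.ofReal r * edist x y := by
  rw [edist_dist, edist_dist, hS, ENNReal.ofReal_mul hr]

theorem infEDist_image_of_dist_eq_mul (hr : 0 < r) (hS : ∀ x y, dist (S x) (S y) = r * dist x y)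
    (x : X) (A : Set X) : infEDist (S x) (S '' A) = ENNReal.ofReal r * infEDist x A := by
  simp only [infEDist, iInf_image, edist_eq_mul_of_dist_eq_mul hr.le hS,
    ENNReal.mul_iInf_of_ne (ENNReal.ofReal_pos.2 hr).ne' ENNReal.ofReal_ne_top]

theorem image_cthickening_of_dist_eq_mul (hr : 0 < r) (hS : ∀ x y, dist (S x) (S y) = r * dist x y)
    (hSsurj : Function.Surjective S) (δ : ℝ) (A : Set X) :
    S '' cthickening δ A = cthickening (r * δ) (S '' A) := by
  have hinj : Function.Injective S := fun x y h => by
    simpa [hr.ne'] using (hS x y).symm.trans (dist_eq_zero.2 h)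
  ext z
  obtain ⟨x, rfl⟩ := hSsurj z
  rw [hinj.mem_set_image, mem_cthickening_iff, mem_cthickening_iff,
    infEDist_image_of_dist_eq_mul hr hS, ENNReal.ofReal_mul hr.le,
    ENNReal.mul_le_mul_iff_right (ENNReal.ofReal_pos.2 hr).ne' ENNReal.ofReal_ne_top]

end MetricSimilarity

theorem Metric.cthickening_iUnion_of_finite {X ι : Type*} [PseudoEMetricSpace X] [Finite ι]
    (δ : ℝ) (s : ι → Set X) : cthickening δ (⋃ i, s i) = ⋃ i, cthickening δ (s i) := by
  cases isEmpty_or_nonempty ι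
  · simp
  ext x
  obtain ⟨i, hi⟩ := Finite.exists_min fun i => infEDist x (s i)
  have hmin : infEDist x (⋃ i, s i) = infEDist x (s i) := by
    rw [infEDist_iUnion]
    exact le_antisymm (iInf_le _ _) (le_iInf hi)
  simp only [mem_cthickening_iff, mem_iUnion, hmin]
  exact ⟨fun h => ⟨i, h⟩, fun ⟨j, hj⟩ => (hi j).trans hj⟩

section EuclideanSimilarity

variable {E : Type*} [NormedAddCommGroup E] [InnerProductSpace ℝ E] {S : E → E} {r : ℝ}

theorem Isometry.exists_linearIsometry_of_map_zero {T : E → E} (hT : Isometry T) (h0 : T 0 = 0) :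
    ∃ f : E →ₗᵢ[ℝ] E, ⇑f = T := by
  have hnorm : ∀ x, ‖T x‖ = ‖x‖ := fun x => by simpa [h0] using hT.norm_map_of_map_zero h0 x
  have hinner : ∀ x y, ⟪T x, T y⟫ = ⟪x, y⟫ := fun x y => by
    rw [real_inner_eq_norm_mul_self_add_norm_mul_self_sub_norm_sub_mul_self_div_two,
      real_inner_eq_norm_mul_self_add_norm_mul_self_sub_norm_sub_mul_self_div_two x,
      hnorm, hnorm, ← dist_eq_norm, hT.dist_eq, dist_eq_norm]
  have eq_of_inner : ∀ u v : E, ⟪u - v, u - v⟫ = 0 → u = v := fun u v h =>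
    sub_eq_zero.1 (inner_self_eq_zero.1 h)
  refine ⟨⟨⟨⟨T, fun x y => eq_of_inner _ _ ?_⟩, fun c x => eq_of_inner _ _ ?_⟩, hnorm⟩, rfl⟩
  · simp only [inner_sub_left, inner_sub_right, inner_add_left, inner_add_right, hinner]
    ring
  · simp only [inner_sub_left, inner_sub_right, real_inner_smul_left, real_inner_smul_right,
      hinner, RingHom.id_apply]
    ring

theorem image_eq_vadd_smul_image {e : E ≃ₗᵢ[ℝ] E} (he : ∀ x, S x = S 0 + r • e x) (A : Set E) :
    S '' A = S 0 +ᵥ r • (e '' A) := by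
  rw [← image_smul, ← image_vadd, image_image, image_image]
  exact image_congr fun x _ => he x

variable [FiniteDimensional ℝ E]

theorem exists_linearIsometryEquiv_of_dist_eq_mul (hr : 0 < r)
    (hS : ∀ x y, dist (S x) (S y) = r * dist x y) :
    ∃ e : E ≃ₗᵢ[ℝ] E, ∀ x, S x = S 0 + r • e x := by
  have hT : Isometry fun x => r⁻¹ • (S x - S 0) := Isometry.of_dist_eq fun x y => by
    rw [dist_eq_norm, ← smul_sub, sub_sub_sub_cancel_right, norm_smul, ← dist_eq_norm, hS,
      Real.norm_of_nonneg (inv_nonneg.2 hr.le), inv_mul_cancel_left₀ hr.ne']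
  obtain ⟨f, hf⟩ := hT.exists_linearIsometry_of_map_zero (by simp)
  refine ⟨f.toLinearIsometryEquiv rfl, fun x => ?_⟩
  rw [LinearIsometry.coe_toLinearIsometryEquiv, hf, smul_inv_smul₀ hr.ne', add_sub_cancel]

theorem surjective_of_dist_eq_mul (hr : 0 < r)
    (hS : ∀ x y, dist (S x) (S y) = r * dist x y) : Function.Surjective S := fun y => by
  obtain ⟨e, he⟩ := exists_linearIsometryEquiv_of_dist_eq_mul hr hS
  exact ⟨e.symm (r⁻¹ • (y - S 0)), by
    rw [he, e.apply_symm_apply, smul_inv_smul₀ hr.ne', add_sub_cancel]⟩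

theorem isOpenMap_of_dist_eq_mul (hr : 0 < r)
    (hS : ∀ x y, dist (S x) (S y) = r * dist x y) : IsOpenMap S := fun U hU => by
  obtain ⟨e, he⟩ := exists_linearIsometryEquiv_of_dist_eq_mul hr hS
  rw [image_eq_vadd_smul_image he]
  exact ((e.toHomeomorph.isOpenMap U hU).smul₀ hr.ne').vadd _

theorem volume_image_of_dist_eq_mul [MeasurableSpace E] [BorelSpace E]
    (hr : 0 < r) (hS : ∀ x y, dist (S x) (S y) = r * dist x y) (A : Set E) :
    volume (S '' A) = ENNReal.ofReal (r ^ finrank ℝ E) * volume A := by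
  obtain ⟨e, he⟩ := exists_linearIsometryEquiv_of_dist_eq_mul hr hS
  rw [image_eq_vadd_smul_image he, measure_vadd, Measure.addHaar_smul, abs_of_pos (pow_pos hr _),
    e.image_eq_preimage_symm]
  exact congrArg _ (e.symm.measurePreserving.measure_preimage_equiv
    (f := e.symm.toHomeomorph.toMeasurableEquiv) A)

end EuclideanSimilarity

open Real in
theorem one_le_of_tendsto_log_div_log {V : ℝ → ℝ} {ρ q C : ℝ} (hρ0 : 0 < ρ) (hρ1 : ρ < 1)
    (hV : ∀ n : ℕ, 0 < V (ρ ^ n)) (hVle : ∀ n : ℕ, V (ρ ^ n) ≤ q ^ n * C)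
    (hlim : Tendsto (fun ε => log (V ε) / log ε) (𝓝[>] 0) (𝓝 0)) : 1 ≤ q := by
  have hC : 0 < C := by simpa using (hV 0).trans_le (hVle 0)
  have hq : 0 < q := by
    have := (hV 1).trans_le (hVle 1)
    rw [pow_one] at this
    exact pos_of_mul_pos_left this hC.le
  have hlogρ : log ρ < 0 := log_neg hρ0 hρ1
  have hlhs : Tendsto (fun n : ℕ => log (V (ρ ^ n)) / log (ρ ^ n) * log ρ) atTop (𝓝 0) := by
    simpa using (hlim.comp (tendsto_pow_atTop_nhdsWithin_zero_of_lt_one hρ0 hρ1)).mul_const (log ρ)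
  have hrhs : Tendsto (fun n : ℕ => log C / n + log q) atTop (𝓝 (log q)) := by
    simpa using (tendsto_const_div_atTop_nhds_zero_nat (log C)).add_const (log q)
  -- `log V(ρⁿ) / n` tends to `0` and is at most `log q + log C / n`
  rw [← log_nonneg_iff hq]
  refine le_of_tendsto_of_tendsto hlhs hrhs (eventually_atTop.2 ⟨1, fun n hn => ?_⟩)
  have hn : (0 : ℝ) < n := by exact_mod_cast hn
  have hlogV : log (V (ρ ^ n)) ≤ n * log q + log C := by
    rw [← log_pow, ← log_mul (pow_pos hq n).ne' hC.ne']
    exact log_le_log (hV n) (hVle n)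
  have hdiv : log (V (ρ ^ n)) / log (ρ ^ n) * log ρ = log (V (ρ ^ n)) / n := by
    rw [log_pow]
    field_simp [hlogρ.ne]
  simp only [hdiv, div_add' _ _ _ hn.ne', div_le_div_iff_of_pos_right hn]
  linarith

def hutchinson {X ι : Type*} (S : ι → X → X) (A : Set X) : Set X := ⋃ i, S i '' A

theorem hutchinson_mono {X ι : Type*} (S : ι → X → X) : Monotone (hutchinson S) :=
  fun _ _ h => iUnion_mono fun _ => image_mono h

section SelfSimilar

variable {E : Type*} [NormedAddCommGroup E] [InnerProductSpace ℝ E] [FiniteDimensional ℝ E]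
  {ι : Type*} {S : ι → E → E} {r : ι → ℝ} {F : Set E}

theorem isOpen_hutchinson (hr : ∀ i, 0 < r i)
    (hS : ∀ i x y, dist (S i x) (S i y) = r i * dist x y) {A : Set E} (hA : IsOpen A) :
    IsOpen (hutchinson S A) :=
  isOpen_iUnion fun i => isOpenMap_of_dist_eq_mul (hr i) (hS i) A hA

theorem iterate_hutchinson_cthickening_subset (hr : ∀ i, 0 < r i)
    (hS : ∀ i x y, dist (S i x) (S i y) = r i * dist x y) (hF : F = hutchinson S F)
    {ρ δ : ℝ} (hρ0 : 0 ≤ ρ) (hρ : ∀ i, r i ≤ ρ) (hδ : 0 ≤ δ) (n : ℕ) :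
    (hutchinson S)^[n] (cthickening δ F) ⊆ cthickening (ρ ^ n * δ) F := by
  induction n with
  | zero => simp
  | succ n ih =>
    rw [Function.iterate_succ_apply']
    refine (hutchinson_mono S ih).trans (iUnion_subset fun i => ?_)
    rw [image_cthickening_of_dist_eq_mul (hr i) (hS i) (surjective_of_dist_eq_mul (hr i) (hS i))]
    refine (cthickening_mono ?_ _).trans
      (cthickening_subset_of_subset _ ((subset_iUnion (fun j => S j '' F) i).trans hF.ge))
    rw [pow_succ', mul_assoc]
    exact mul_le_mul_of_nonneg_right (hρ i) (by positivity)

variable [Fintype ι] [MeasurableSpace E] [BorelSpace E]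

theorem volume_cthickening_mul_le (hr : ∀ i, 0 < r i)
    (hS : ∀ i x y, dist (S i x) (S i y) = r i * dist x y) (hF : F = hutchinson S F)
    {ρ ε : ℝ} (hρ : ∀ i, ρ ≤ r i) (hε : 0 ≤ ε) :
    volume (cthickening (ρ * ε) F)
      ≤ ENNReal.ofReal (∑ i, r i ^ finrank ℝ E) * volume (cthickening ε F) := by
  have hcover : cthickening (ρ * ε) F ⊆ hutchinson S (cthickening ε F) := by
    conv_lhs => rw [hF]
    rw [hutchinson, hutchinson, cthickening_iUnion_of_finite]
    refine iUnion_mono fun i => ?_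
    rw [image_cthickening_of_dist_eq_mul (hr i) (hS i) (surjective_of_dist_eq_mul (hr i) (hS i))]
    exact cthickening_mono (mul_le_mul_of_nonneg_right (hρ i) hε) _
  calc volume (cthickening (ρ * ε) F) ≤ ∑ i, volume (S i '' cthickening ε F) :=
        (measure_mono hcover).trans (measure_iUnion_fintype_le _ _)
    _ = _ := by
        simp only [volume_image_of_dist_eq_mul (hr _) (hS _), ← Finset.sum_mul,
          ENNReal.ofReal_sum_of_nonneg fun i _ => pow_nonneg (hr i).le _]

theorem volume_cthickening_pow_le (hr : ∀ i, 0 < r i)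
    (hS : ∀ i x y, dist (S i x) (S i y) = r i * dist x y) (hF : F = hutchinson S F)
    {ρ : ℝ} (hρ0 : 0 ≤ ρ) (hρ : ∀ i, ρ ≤ r i) (n : ℕ) :
    volume (cthickening (ρ ^ n) F)
      ≤ ENNReal.ofReal (∑ i, r i ^ finrank ℝ E) ^ n * volume (cthickening 1 F) := by
  induction n with
  | zero => simp
  | succ n ih =>
    rw [pow_succ', pow_succ', mul_assoc]
    exact (volume_cthickening_mul_le hr hS hF hρ (pow_nonneg hρ0 n)).trans (by gcongr)

open Real in
theorem one_le_sum_pow_finrank_of_tendsto [Nonempty ι] (hr : ∀ i, r i ∈ Ioo 0 1)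
    (hS : ∀ i x y, dist (S i x) (S i y) = r i * dist x y) (hF : F = hutchinson S F)
    (hFc : IsCompact F) (hFne : F.Nonempty)
    (hdim : Tendsto (fun ε => log (volume (cthickening ε F)).toReal / log ε) (𝓝[>] 0) (𝓝 0)) :
    1 ≤ ∑ i, r i ^ finrank ℝ E := by
  obtain ⟨i₀, hi₀⟩ := Finite.exists_min r
  obtain ⟨x, hx⟩ := hFne
  have hfin : ∀ ε, volume (cthickening ε F) ≠ ⊤ := fun ε =>
    hFc.isBounded.cthickening.measure_lt_top.ne
  refine one_le_of_tendsto_log_div_log (C := (volume (cthickening 1 F)).toReal) (hr i₀).1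
    (hr i₀).2 (fun n => ?_) (fun n => ?_) hdim
  · refine ENNReal.toReal_pos ?_ (hfin _)
    exact ((measure_closedBall_pos volume x (pow_pos (hr i₀).1 n)).trans_le
      (measure_mono (closedBall_subset_cthickening hx _))).ne'
  · have := volume_cthickening_pow_le (fun i => (hr i).1) hS hF (hr i₀).1.le hi₀ n
    rw [← ENNReal.toReal_le_toReal (hfin _)
      (ENNReal.mul_ne_top (ENNReal.pow_ne_top ENNReal.ofReal_ne_top) (hfin 1))] at this
    simpa [ENNReal.toReal_ofReal (Finset.sum_nonneg fun i _ => pow_nonneg (hr i).1.le _)] using this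

theorem volume_hutchinson_of_subset (hr : ∀ i, 0 < r i)
    (hS : ∀ i x y, dist (S i x) (S i y) = r i * dist x y) {O A : Set E}
    (hOdisj : Pairwise fun i j => Disjoint (S i '' O) (S j '' O)) (hA : IsOpen A) (hAO : A ⊆ O) :
    volume (hutchinson S A) = ENNReal.ofReal (∑ i, r i ^ finrank ℝ E) * volume A := by
  rw [hutchinson, measure_iUnion
    (fun i j hij => (hOdisj hij).mono (image_mono hAO) (image_mono hAO))
    (fun i => (isOpenMap_of_dist_eq_mul (hr i) (hS i) A hA).measurableSet), tsum_fintype]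
  simp only [volume_image_of_dist_eq_mul (hr _) (hS _), ← Finset.sum_mul,
    ENNReal.ofReal_sum_of_nonneg fun i _ => pow_nonneg (hr i).le _]

theorem volume_le_volume_iterate_hutchinson (hr : ∀ i, 0 < r i)
    (hS : ∀ i x y, dist (S i x) (S i y) = r i * dist x y) {O : Set E}
    (hOmap : ∀ i, S i '' O ⊆ O) (hOdisj : Pairwise fun i j => Disjoint (S i '' O) (S j '' O))
    (hq : 1 ≤ ∑ i, r i ^ finrank ℝ E) (n : ℕ) {A : Set E} (hA : IsOpen A) (hAO : A ⊆ O) :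
    volume A ≤ volume ((hutchinson S)^[n] A) := by
  induction n generalizing A with
  | zero => rfl
  | succ n ih =>
    rw [Function.iterate_succ_apply]
    refine le_trans ?_ (ih (isOpen_hutchinson hr hS hA)
      ((hutchinson_mono S hAO).trans (iUnion_subset hOmap)))
    rw [volume_hutchinson_of_subset hr hS hOdisj hA hAO]
    exact le_mul_of_one_le_left zero_le (ENNReal.one_le_ofReal.2 hq)

theorem volume_pos_of_one_le_sum_pow_finrank [Nonempty ι] (hr : ∀ i, r i ∈ Ioo 0 1)
    (hS : ∀ i x y, dist (S i x) (S i y) = r i * dist x y) (hF : F = hutchinson S F)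
    (hFc : IsCompact F) (hFne : F.Nonempty) {O : Set E} (hOne : O.Nonempty) (hO : IsOpen O)
    (hOmap : ∀ i, S i '' O ⊆ O) (hOdisj : Pairwise fun i j => Disjoint (S i '' O) (S j '' O))
    (hq : 1 ≤ ∑ i, r i ^ finrank ℝ E) : 0 < volume F := by
  have hr0 : ∀ i, 0 < r i := fun i => (hr i).1
  obtain ⟨i₁, hi₁⟩ := Finite.exists_max r
  obtain ⟨x, hx⟩ := hOne
  obtain ⟨y, hy⟩ := hFne
  set c := 1 + dist x y
  have hA : IsOpen (O ∩ ball x 1) := hO.inter isOpen_ball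
  have hApos : 0 < volume (O ∩ ball x 1) := hA.measure_pos volume ⟨x, hx, mem_ball_self one_pos⟩
  have hAc : O ∩ ball x 1 ⊆ cthickening c F := inter_subset_right.trans <|
    (ball_subset_ball' le_rfl).trans <|
      (ball_subset_thickening hy c).trans (thickening_subset_cthickening c F)
  have hbound : ∀ n : ℕ, volume (O ∩ ball x 1) ≤ volume (cthickening (r i₁ ^ n * c) F) :=
    fun n => (volume_le_volume_iterate_hutchinson hr0 hS hOmap hOdisj hq n hA
      inter_subset_left).trans (measure_mono <| ((hutchinson_mono S).iterate n hAc).trans <|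
        iterate_hutchinson_cthickening_subset hr0 hS hF (hr0 i₁).le hi₁ (by positivity) n)
  have hlim : Tendsto (fun n : ℕ => volume (cthickening (r i₁ ^ n * c) F)) atTop
      (𝓝 (volume F)) := by
    refine (tendsto_measure_cthickening_of_isCompact hFc).comp ?_
    simpa using (tendsto_pow_atTop_nhds_zero_of_lt_one (hr0 i₁).le (hr i₁).2).mul_const c
  exact hApos.trans_le (ge_of_tendsto' hlim hbound)

end SelfSimilar

theorem pSet_eq_cthickening {d : ℕ} {A : Set (Euc d)} (hA : A.Nonempty) {ε : ℝ} (hε : 0 ≤ ε) :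
    pSet A ε = cthickening ε A := by
  ext x
  rw [pSet, mem_ofPred_eq, mem_cthickening_iff, infDist,
    ← ENNReal.le_ofReal_iff_toReal_le (infEDist_ne_top hA) hε]

theorem tendsto_volume_pSet {d : ℕ} {A : Set (Euc d)} (hA : IsCompact A) (hAne : A.Nonempty) :
    Tendsto (fun ε => (volume (pSet A ε)).toReal) (𝓝[>] 0) (𝓝 (volume A).toReal) := by
  refine ((ENNReal.tendsto_toReal hA.measure_lt_top.ne).comp
    ((tendsto_measure_cthickening_of_isCompact hA).mono_left nhdsWithin_le_nhds)).congr' ?_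
  filter_upwards [self_mem_nhdsWithin] with ε (hε : 0 < ε)
  rw [Function.comp_apply, pSet_eq_cthickening hAne hε.le]

theorem stmt1_general (d N : ℕ)
    (S : Fin N → Euc d → Euc d) (r : Fin N → ℝ)
    (hr : ∀ i, r i ∈ Set.Ioo (0 : ℝ) 1)
    (hsim : ∀ i x y, dist (S i x) (S i y) = r i * dist x y)
    (F : Set (Euc d)) (hFne : F.Nonempty) (hFcomp : IsCompact F)
    (hFinv : F = ⋃ i, S i '' F)
    -- open set condition
    (O : Set (Euc d)) (hOne : O.Nonempty) (hOopen : IsOpen O)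
    (hOmap : ∀ i, S i '' O ⊆ O)
    (hOdisj : ∀ i j, i ≠ j → Disjoint (S i '' O) (S j '' O))
    -- the Minkowski (box) dimension of `F` equals `d`
    (hdim : Tendsto
      (fun ε : ℝ => (d : ℝ) - Real.log ((volume (pSet F ε)).toReal) / Real.log ε)
      (𝓝[>] (0 : ℝ)) (𝓝 (d : ℝ))) :
    -- the `d`-dimensional Minkowski content exists, equals `λ_d(F)`, and is positive
    Tendsto (fun ε : ℝ => (volume (pSet F ε)).toReal) (𝓝[>] (0 : ℝ))
      (𝓝 ((volume F).toReal)) ∧ 0 < (volume F).toReal := by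
  have : Nonempty (Fin N) := by
    obtain ⟨i, -⟩ := mem_iUnion.1 (hFinv.subset hFne.some_mem)
    exact ⟨i⟩
  have hlim : Tendsto (fun ε => Real.log (volume (cthickening ε F)).toReal / Real.log ε)
      (𝓝[>] 0) (𝓝 0) := by
    have h := hdim.const_sub (d : ℝ)
    simp only [sub_sub_cancel, sub_self] at h
    refine h.congr' ?_
    filter_upwards [self_mem_nhdsWithin] with ε (hε : 0 < ε)
    rw [pSet_eq_cthickening hFne hε.le]
  have hq := one_le_sum_pow_finrank_of_tendsto hr hsim hFinv hFcomp hFne hlim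
  have hpos := volume_pos_of_one_le_sum_pow_finrank hr hsim hFinv hFcomp hFne hOne hOopen hOmap
    (fun i j hij => hOdisj i j hij) hq
  exact ⟨tendsto_volume_pSet hFcomp hFne, ENNReal.toReal_pos hpos.ne' hFcomp.measure_lt_top.ne⟩

/-- If `F ⊆ ℝ^d` is the attractor of a self-similar system satisfying the
open set condition, and the Minkowski (box) dimension of `F` equals `d`, then `F` is
Minkowski measurable of dimension `d` with Minkowski content `M_d(F) = λ_d(F) > 0`. -/
theorem stmt1 (d N : ℕ) (hN : 2 ≤ N)
    (S : Fin N → Euc d → Euc d) (r : Fin N → ℝ)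
    (hr : ∀ i, r i ∈ Set.Ioo (0 : ℝ) 1)
    (hsim : ∀ i x y, dist (S i x) (S i y) = r i * dist x y)
    (F : Set (Euc d)) (hFne : F.Nonempty) (hFcomp : IsCompact F)
    (hFinv : F = ⋃ i, S i '' F)
    -- open set condition
    (O : Set (Euc d)) (hOne : O.Nonempty) (hOopen : IsOpen O)
    (hOmap : ∀ i, S i '' O ⊆ O)
    (hOdisj : ∀ i j, i ≠ j → Disjoint (S i '' O) (S j '' O))
    -- the Minkowski (box) dimension of `F` equals `d`
    (hdim : Tendsto
      (fun ε : ℝ => (d : ℝ) - Real.log ((volume (pSet F ε)).toReal) / Real.log ε)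
      (𝓝[>] (0 : ℝ)) (𝓝 (d : ℝ))) :
    -- the `d`-dimensional Minkowski content exists, equals `λ_d(F)`, and is positive
    Tendsto (fun ε : ℝ => (volume (pSet F ε)).toReal) (𝓝[>] (0 : ℝ))
      (𝓝 ((volume F).toReal)) ∧ 0 < (volume F).toReal :=
  stmt1_general d N S r hr hsim F hFne hFcomp hFinv O hOne hOopen hOmap hOdisj hdim
end

section
/- (Renewal theorem, Cesàro averages.) Let p_1, …, p_N ∈ (0,1) with Σ_{i=1}^N p_i = 1, let y_1, …, y_N > 0, and set η := Σ_{i=1}^N y_i p_i. Let z : ℝ → ℝ have a discrete set of discontinuities and satisfy |z(t)| ≤ c_1 e^{−c_2 |t|} for all t ∈ ℝ, for some constants 0 < c_1, c_2 < ∞. Let Z : ℝ → ℝ satisfy the renewal equation Z(t) = z(t) + Σ_{i=1}^N p_i Z(t − y_i) for all t and lim_{t→−∞} Z(t) = 0. Then, irrespective of any lattice condition on the y_i, lim_{T→∞} (1/T) ∫_0^T Z(t) dt = (1/η) ∫_{−∞}^∞ z(t) dt. -/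
/-!
Write `P f t = ∑ pᵢ f (t - yᵢ)`, so that the renewal equation reads `Z = z + P Z`. Iterating,
`Z = ∑_{k<n} Pᵏ z + Pⁿ Z`, and `Pⁿ Z → 0` pointwise since `Pⁿ` only sees arguments
`≤ t - n · min yᵢ`, where `Z` is small. The same shift turns the exponential decay of `z` at `-∞`
into that of `Z`, so `Z` is measurable and integrable on every `(-∞, T]`.

The primitive `G T = ∫_{-∞}^T Z` solves `G - P G = ∫_{-∞}^T z → ∫ z`, and `P` maps `T ↦ T` to
`T ↦ T - η`, so `u = G - (∫ z / η) T` solves a renewal equation whose forcing tends to `0`.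
As `P` averages, once the forcing is below `ε` the bound on `|u|` grows by at most `ε` each time
`T` advances by `min yᵢ`. Hence `u T = o(T)` and `G T / T → ∫ z / η`; only Cesàro averages
enter, which is why no lattice condition is needed.
-/

open MeasureTheory Filter Set Topology

lemma LinearMap.eq_sum_range_pow_add_pow_of_eq_add {R M : Type*} [Semiring R] [AddCommMonoid M]
    [Module R M] (L : M →ₗ[R] M) {x z : M} (h : x = z + L x) (n : ℕ) :
    x = ∑ k ∈ Finset.range n, (L ^ k) z + (L ^ n) x := by
  induction n with
  | zero => simp
  | succ n ih =>
    calc x = ∑ k ∈ Finset.range n, (L ^ k) z + (L ^ n) (z + L x) := by rw [← h]; exact ih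
      _ = _ := by rw [map_add, Finset.sum_range_succ, pow_succ, Module.End.mul_apply, add_assoc]

lemma exists_pos_forall_le {ι : Type*} [Finite ι] {y : ι → ℝ} (hy : ∀ i, 0 < y i) :
    ∃ m > 0, ∀ i, m ≤ y i := by
  cases isEmpty_or_nonempty ι
  · exact ⟨1, one_pos, isEmptyElim⟩
  · obtain ⟨i₀, hi₀⟩ := Finite.exists_min y
    exact ⟨y i₀, hy i₀, hi₀⟩

lemma integrable_exp_neg_mul_abs {c : ℝ} (hc : 0 < c) :
    Integrable fun t : ℝ => Real.exp (-c * |t|) := by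
  rw [← integrableOn_univ, ← Iic_union_Ioi (a := 0)]
  refine ((integrableOn_exp_mul_Iic hc 0).congr_fun (fun t ht => ?_) measurableSet_Iic).union
    ((exp_neg_integrableOn_Ioi 0 hc).congr_fun (fun t ht => ?_) measurableSet_Ioi)
  · rw [abs_of_nonpos ht, mul_neg, neg_mul, neg_neg]
  · rw [abs_of_pos ht]

lemma IntegrableOn.comp_sub_right_Iic {f : ℝ → ℝ} {T c : ℝ} (hf : IntegrableOn f (Iic (T - c))) :
    IntegrableOn (fun t => f (t - c)) (Iic T) := by
  have hpre : (fun t => t - c) ⁻¹' Iic (T - c) = Iic T := by ext; simp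
  rw [← hpre]
  exact ((measurePreserving_sub_right volume c).integrableOn_comp_preimage
    (MeasurableEquiv.subRight c).measurableEmbedding).2 hf

lemma setIntegral_Iic_comp_sub_right (f : ℝ → ℝ) (T c : ℝ) :
    ∫ t in Iic T, f (t - c) = ∫ t in Iic (T - c), f t := by
  have hpre : (fun t => t - c) ⁻¹' Iic (T - c) = Iic T := by ext; simp
  rw [← hpre, (measurePreserving_sub_right volume c).setIntegral_preimage_emb
    (MeasurableEquiv.subRight c).measurableEmbedding]

lemma exists_abs_setIntegral_Iic_le {f : ℝ → ℝ} (hf : ∀ T, IntegrableOn f (Iic T)) (a b : ℝ) :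
    ∃ C, ∀ s ∈ Icc a b, |∫ t in Iic s, f t| ≤ C :=
  ⟨∫ t in Iic b, |f t|, fun _ hs => abs_integral_le_integral_abs.trans <|
    setIntegral_mono_set (hf b).abs (ae_of_all _ fun _ => abs_nonneg _)
      (Iic_subset_Iic.2 hs.2).eventuallyLE⟩

section RenewalOperator

variable {ι : Type*} [Fintype ι]

noncomputable def renewalOp (p y : ι → ℝ) : (ℝ → ℝ) →ₗ[ℝ] ℝ → ℝ where
  toFun f t := ∑ i, p i * f (t - y i)
  map_add' f g := by ext t; simp [mul_add, Finset.sum_add_distrib]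
  map_smul' c f := by ext t; simp [Finset.mul_sum, mul_left_comm]

@[simp]
lemma renewalOp_apply (p y : ι → ℝ) (f : ℝ → ℝ) (t : ℝ) :
    renewalOp p y f t = ∑ i, p i * f (t - y i) :=
  rfl

variable {p y : ι → ℝ}

lemma renewalOp_apply_id (hpsum : ∑ i, p i = 1) (t : ℝ) :
    renewalOp p y id t = t - ∑ i, y i * p i := by
  simp [mul_sub, Finset.sum_sub_distrib, ← Finset.mul_sum, hpsum, mul_comm]

lemma abs_renewalOp_apply_le (hp : ∀ i, 0 ≤ p i) (hpsum : ∑ i, p i = 1) {f : ℝ → ℝ}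
    {t B : ℝ} (hf : ∀ i, |f (t - y i)| ≤ B) : |renewalOp p y f t| ≤ B :=
  calc |renewalOp p y f t| ≤ ∑ i, p i * |f (t - y i)| := by
        simpa only [renewalOp_apply, abs_mul, abs_of_nonneg (hp _)]
          using Finset.abs_sum_le_sum_abs (fun i => p i * f (t - y i)) Finset.univ
    _ ≤ ∑ i, p i * B := by gcongr with i; exacts [hp i, hf i]
    _ = B := by rw [← Finset.sum_mul, hpsum, one_mul]

lemma abs_renewalOp_pow_apply_le (hp : ∀ i, 0 ≤ p i) (hpsum : ∑ i, p i = 1) {m : ℝ}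
    (hym : ∀ i, m ≤ y i) {f g : ℝ → ℝ} (hg : Monotone g) (n : ℕ) {t : ℝ}
    (hf : ∀ s ≤ t - n * m, |f s| ≤ g s) : |(renewalOp p y ^ n) f t| ≤ g (t - n * m) := by
  induction n generalizing t with
  | zero => simpa using hf t (by simp)
  | succ n ih =>
    rw [pow_succ', Module.End.mul_apply]
    refine abs_renewalOp_apply_le hp hpsum fun i => (ih fun s hs => hf s ?_).trans (hg ?_) <;>
    · push_cast; linarith [hym i]

lemma tendsto_renewalOp_pow_apply_zero (hp : ∀ i, 0 ≤ p i) (hpsum : ∑ i, p i = 1) {m : ℝ}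
    (hm : 0 < m) (hym : ∀ i, m ≤ y i) {f : ℝ → ℝ} (hf : Tendsto f atBot (𝓝 0)) (t : ℝ) :
    Tendsto (fun n => (renewalOp p y ^ n) f t) atTop (𝓝 0) := by
  rw [Metric.nhds_basis_closedBall.tendsto_right_iff] at hf ⊢
  intro ε hε
  obtain ⟨A, hA⟩ := eventually_atBot.1 (hf ε hε)
  filter_upwards [tendsto_natCast_atTop_atTop.eventually_ge_atTop ((t - A) / m)] with n hn
  rw [div_le_iff₀ hm] at hn
  simpa using abs_renewalOp_pow_apply_le hp hpsum hym (g := fun _ => ε) monotone_const n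
    fun s hs => by simpa using hA s (by linarith)

lemma tendsto_sum_renewalOp_pow_apply (hp : ∀ i, 0 ≤ p i) (hpsum : ∑ i, p i = 1) {m : ℝ}
    (hm : 0 < m) (hym : ∀ i, m ≤ y i) {z Z : ℝ → ℝ} (hZeq : Z = z + renewalOp p y Z)
    (hZbot : Tendsto Z atBot (𝓝 0)) (t : ℝ) :
    Tendsto (fun n => ∑ k ∈ Finset.range n, (renewalOp p y ^ k) z t) atTop (𝓝 (Z t)) := by
  have htail := (tendsto_renewalOp_pow_apply_zero hp hpsum hm hym hZbot t).const_sub (Z t)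
  rw [sub_zero] at htail
  refine htail.congr fun n => ?_
  have hZn := congrFun ((renewalOp p y).eq_sum_range_pow_add_pow_of_eq_add hZeq n) t
  simp only [Pi.add_apply, Finset.sum_apply] at hZn
  linarith

lemma exists_abs_le_mul_exp_of_eq_add_renewalOp (hp : ∀ i, 0 ≤ p i) (hpsum : ∑ i, p i = 1)
    {m : ℝ} (hm : 0 < m) (hym : ∀ i, m ≤ y i) {a c : ℝ} (ha : 0 < a) (hc : 0 ≤ c)
    {z Z : ℝ → ℝ} (hz : ∀ t, |z t| ≤ c * Real.exp (a * t)) (hZeq : Z = z + renewalOp p y Z)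
    (hZbot : Tendsto Z atBot (𝓝 0)) :
    ∃ C, ∀ t, |Z t| ≤ C * Real.exp (a * t) := by
  set ρ := Real.exp (-(a * m))
  have hρ : ρ < 1 := Real.exp_lt_one_iff.2 (neg_lt_zero.2 (mul_pos ha hm))
  have hmono : Monotone fun s => c * Real.exp (a * s) := fun s s' hs => by dsimp only; gcongr
  refine ⟨c / (1 - ρ), fun t => le_of_tendsto'
    (tendsto_sum_renewalOp_pow_apply hp hpsum hm hym hZeq hZbot t).abs fun n => ?_⟩
  calc |∑ k ∈ Finset.range n, (renewalOp p y ^ k) z t|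
      ≤ ∑ k ∈ Finset.range n, c * Real.exp (a * t) * ρ ^ k := by
        refine (Finset.abs_sum_le_sum_abs _ _).trans (Finset.sum_le_sum fun k _ => ?_)
        have hshift : c * Real.exp (a * (t - k * m)) = c * Real.exp (a * t) * ρ ^ k := by
          rw [← Real.exp_nat_mul, mul_assoc, ← Real.exp_add]
          ring_nf
        exact hshift ▸ abs_renewalOp_pow_apply_le hp hpsum hym hmono k fun s _ => hz s
    _ = c * Real.exp (a * t) * ∑ k ∈ Finset.range n, ρ ^ k := by rw [Finset.mul_sum]
    _ ≤ c * Real.exp (a * t) * (1 / (1 - ρ)) := by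
        have hgeom := geom_sum_Ico_le_of_lt_one (m := 0) (n := n) (Real.exp_pos _).le hρ
        rw [← Finset.range_eq_Ico, pow_zero] at hgeom
        exact mul_le_mul_of_nonneg_left hgeom (by positivity)
    _ = c / (1 - ρ) * Real.exp (a * t) := by ring

lemma Measurable.renewalOp_pow {f : ℝ → ℝ} (hf : Measurable f) (n : ℕ) :
    Measurable ((renewalOp p y ^ n) f) := by
  induction n with
  | zero => exact hf
  | succ n ih =>
    rw [pow_succ', Module.End.mul_apply]
    exact Finset.measurable_sum _ fun i _ => (ih.comp (measurable_sub_const _)).const_mul _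

lemma measurable_of_eq_add_renewalOp (hp : ∀ i, 0 ≤ p i) (hpsum : ∑ i, p i = 1) {m : ℝ}
    (hm : 0 < m) (hym : ∀ i, m ≤ y i) {z Z : ℝ → ℝ} (hz : Measurable z)
    (hZeq : Z = z + renewalOp p y Z) (hZbot : Tendsto Z atBot (𝓝 0)) : Measurable Z :=
  measurable_of_tendsto_metrizable (fun _ => Finset.measurable_sum _ fun k _ => hz.renewalOp_pow k)
    (tendsto_pi_nhds.2 (tendsto_sum_renewalOp_pow_apply hp hpsum hm hym hZeq hZbot))

lemma integrableOn_Iic_of_eq_add_renewalOp (hp : ∀ i, 0 ≤ p i) (hpsum : ∑ i, p i = 1)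
    (hy : ∀ i, 0 < y i) {a c : ℝ} (ha : 0 < a) (hc : 0 ≤ c) {z Z : ℝ → ℝ} (hzm : Measurable z)
    (hz : ∀ t, |z t| ≤ c * Real.exp (a * t)) (hZeq : Z = z + renewalOp p y Z)
    (hZbot : Tendsto Z atBot (𝓝 0)) (T : ℝ) : IntegrableOn Z (Iic T) := by
  obtain ⟨m, hm, hym⟩ := exists_pos_forall_le hy
  obtain ⟨C, hC⟩ := exists_abs_le_mul_exp_of_eq_add_renewalOp hp hpsum hm hym ha hc hz hZeq hZbot
  exact ((integrableOn_exp_mul_Iic ha T).const_mul C).mono'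
    (measurable_of_eq_add_renewalOp hp hpsum hm hym hzm hZeq hZbot).aestronglyMeasurable
    (ae_of_all _ hC)

lemma integrableOn_Iic_renewalOp {f : ℝ → ℝ} (hf : ∀ T, IntegrableOn f (Iic T)) (T : ℝ) :
    IntegrableOn (renewalOp p y f) (Iic T) :=
  integrable_finsetSum _ fun i _ => (IntegrableOn.comp_sub_right_Iic (hf (T - y i))).const_mul _

lemma setIntegral_Iic_renewalOp {f : ℝ → ℝ} (hf : ∀ T, IntegrableOn f (Iic T)) (T : ℝ) :
    ∫ t in Iic T, renewalOp p y f t = renewalOp p y (fun T => ∫ t in Iic T, f t) T := by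
  simp only [renewalOp_apply]
  rw [integral_finsetSum _ fun i _ => (IntegrableOn.comp_sub_right_Iic (hf (T - y i))).const_mul _]
  simp_rw [integral_const_mul, setIntegral_Iic_comp_sub_right]

lemma tendsto_setIntegral_Iic_sub_renewalOp {z Z : ℝ → ℝ} (hz : Integrable z)
    (hZ : ∀ T, IntegrableOn Z (Iic T)) (hZeq : Z = z + renewalOp p y Z) :
    Tendsto (fun T => (∫ t in Iic T, Z t) - renewalOp p y (fun T => ∫ t in Iic T, Z t) T) atTop
      (𝓝 (∫ t, z t)) := by
  refine ((aecover_Iic tendsto_id).integral_tendsto_of_countably_generated hz).congr fun T => ?_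
  rw [← setIntegral_Iic_renewalOp hZ, ← integral_sub (hZ T) (integrableOn_Iic_renewalOp hZ T)]
  refine setIntegral_congr_fun measurableSet_Iic fun t _ => ?_
  have hZt := congrFun hZeq t
  rw [Pi.add_apply] at hZt
  linarith

lemma abs_le_add_natCast_mul_of_abs_sub_renewalOp_le (hp : ∀ i, 0 ≤ p i) (hpsum : ∑ i, p i = 1)
    {m M A C ε : ℝ} (hm : 0 ≤ m) (hym : ∀ i, m ≤ y i) (hyM : ∀ i, y i ≤ M) {u : ℝ → ℝ}
    (hC : ∀ s ∈ Icc (A - M) A, |u s| ≤ C) (hε : ∀ T ≥ A, |u T - renewalOp p y u T| ≤ ε)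
    (n : ℕ) : ∀ T ∈ Icc (A - M) (A + n * m), |u T| ≤ C + n * ε := by
  have hε0 : 0 ≤ ε := (abs_nonneg _).trans (hε A le_rfl)
  induction n with
  | zero => simpa using hC
  | succ n ih =>
    rintro T ⟨hTlo, hThi⟩
    push_cast at hThi ⊢
    rcases le_or_gt T (A + n * m) with hT | hT
    · linarith [ih T ⟨hTlo, hT⟩]
    · have hAT : A ≤ T := by nlinarith
      have hLu : |renewalOp p y u T| ≤ C + n * ε :=
        abs_renewalOp_apply_le hp hpsum fun i =>
          ih _ ⟨by linarith [hyM i], by linarith [hym i]⟩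
      linarith [abs_sub_abs_le_abs_sub (u T) (renewalOp p y u T), hε T hAT]

lemma abs_le_add_mul_of_abs_sub_renewalOp_le (hp : ∀ i, 0 ≤ p i) (hpsum : ∑ i, p i = 1)
    {m M A C ε : ℝ} (hm : 0 < m) (hym : ∀ i, m ≤ y i) (hyM : ∀ i, y i ≤ M) (hM : 0 ≤ M)
    {u : ℝ → ℝ} (hC : ∀ s ∈ Icc (A - M) A, |u s| ≤ C)
    (hε : ∀ T ≥ A, |u T - renewalOp p y u T| ≤ ε) {T : ℝ} (hT : A ≤ T) :
    |u T| ≤ C + ε + ε / m * (T - A) := by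
  have hε0 : 0 ≤ ε := (abs_nonneg _).trans (hε A le_rfl)
  set n := ⌈(T - A) / m⌉₊
  have hn : (n : ℝ) < (T - A) / m + 1 := Nat.ceil_lt_add_one (div_nonneg (by linarith) hm.le)
  have hTn : T ≤ A + n * m := by
    have := Nat.le_ceil ((T - A) / m)
    rw [div_le_iff₀ hm] at this
    linarith
  calc |u T| ≤ C + n * ε :=
        abs_le_add_natCast_mul_of_abs_sub_renewalOp_le hp hpsum hm.le hym hyM hC hε n T
          ⟨by linarith, hTn⟩
    _ ≤ C + ((T - A) / m + 1) * ε := by gcongr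
    _ = C + ε + ε / m * (T - A) := by ring

lemma isLittleO_id_of_tendsto_sub_renewalOp (hp : ∀ i, 0 ≤ p i) (hpsum : ∑ i, p i = 1)
    (hy : ∀ i, 0 < y i) {u : ℝ → ℝ} (hbdd : ∀ a b, ∃ C, ∀ s ∈ Icc a b, |u s| ≤ C)
    (hu : Tendsto (fun T => u T - renewalOp p y u T) atTop (𝓝 0)) : u =o[atTop] id := by
  obtain ⟨m, hm, hym⟩ := exists_pos_forall_le hy
  have hyM : ∀ i, y i ≤ ∑ j, y j := fun i =>
    Finset.single_le_sum (fun j _ => (hy j).le) (Finset.mem_univ i)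
  have hM : 0 ≤ ∑ j, y j := Finset.sum_nonneg fun j _ => (hy j).le
  refine Asymptotics.isLittleO_iff.2 fun c hc => ?_
  obtain ⟨A₀, hA₀⟩ := eventually_atTop.1
    (Metric.nhds_basis_closedBall.tendsto_right_iff.1 hu (c * m / 2) (by positivity))
  set A := max A₀ 0
  obtain ⟨C, hC⟩ := hbdd (A - ∑ j, y j) A
  have hgrowth := fun T (hT : A ≤ T) => abs_le_add_mul_of_abs_sub_renewalOp_le hp hpsum hm hym
    hyM hM hC (fun T hT => by simpa using hA₀ T ((le_max_left _ _).trans hT)) hT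
  filter_upwards [eventually_ge_atTop A, eventually_ge_atTop (2 * (C + c * m / 2) / c)]
    with T hTA hTC
  have hA : 0 ≤ A := le_max_right _ _
  rw [div_le_iff₀ hc] at hTC
  rw [Real.norm_eq_abs, Real.norm_eq_abs, id, abs_of_nonneg (hA.trans hTA)]
  calc |u T| ≤ C + c * m / 2 + c * m / 2 / m * (T - A) := hgrowth T hTA
    _ = C + c * m / 2 + c / 2 * (T - A) := by field_simp
    _ ≤ c * T := by nlinarith

lemma tendsto_inv_mul_of_tendsto_sub_renewalOp (hp : ∀ i, 0 ≤ p i) (hpsum : ∑ i, p i = 1)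
    (hy : ∀ i, 0 < y i) {G : ℝ → ℝ} {I : ℝ} (hbdd : ∀ a b, ∃ C, ∀ s ∈ Icc a b, |G s| ≤ C)
    (hG : Tendsto (fun T => G T - renewalOp p y G T) atTop (𝓝 I)) :
    Tendsto (fun T => T⁻¹ * G T) atTop (𝓝 ((∑ i, y i * p i)⁻¹ * I)) := by
  set η := ∑ i, y i * p i
  obtain ⟨m, hm, hym⟩ := exists_pos_forall_le hy
  have hη : 0 < η := calc
    0 < m := hm
    _ = ∑ i, m * p i := by rw [← Finset.mul_sum, hpsum, mul_one]
    _ ≤ η := Finset.sum_le_sum fun i _ => mul_le_mul_of_nonneg_right (hym i) (hp i)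
  set u := G - (η⁻¹ * I) • id
  have hu : ∀ T, u T - renewalOp p y u T = G T - renewalOp p y G T - I := by
    intro T
    simp only [u, map_sub, map_smul, Pi.sub_apply, Pi.smul_apply, renewalOp_apply_id hpsum,
      id, smul_eq_mul]
    field_simp
    ring
  have hubdd : ∀ a b, ∃ C, ∀ s ∈ Icc a b, |u s| ≤ C := by
    intro a b
    obtain ⟨C, hC⟩ := hbdd a b
    refine ⟨C + |η⁻¹ * I| * max |a| |b|, fun s hs => ?_⟩
    calc |u s| ≤ |G s| + |η⁻¹ * I| * |s| := by
          simpa [u, abs_mul] using abs_sub (G s) (η⁻¹ * I * s)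
      _ ≤ C + |η⁻¹ * I| * max |a| |b| := by
          gcongr
          exacts [hC s hs, abs_le_max_abs_abs hs.1 hs.2]
  have hforce := hG.sub_const I
  rw [sub_self] at hforce
  have ho := (isLittleO_id_of_tendsto_sub_renewalOp hp hpsum hy hubdd
    (hforce.congr fun T => (hu T).symm)).tendsto_div_nhds_zero
  refine (by simpa using ho.add_const (η⁻¹ * I) : Tendsto _ _ _).congr' ?_
  filter_upwards [eventually_ne_atTop 0] with T hT
  simp only [u, id, Pi.sub_apply, Pi.smul_apply, smul_eq_mul]
  field_simp
  ring

end RenewalOperator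

/-- **Renewal theorem, Cesàro averages.**
Let `p_i ∈ (0,1)` with `Σ p_i = 1`, `y_i > 0`, `η = Σ y_i p_i`.  Let `z : ℝ → ℝ` have a
discrete set of discontinuities and satisfy `|z(t)| ≤ c₁ e^{−c₂|t|}`.  Let `Z` solve the
renewal equation `Z(t) = z(t) + Σ p_i Z(t − y_i)` with `Z(t) → 0` as `t → −∞`.  Then,
irrespective of any lattice condition on the `y_i`,
`lim_{T→∞} (1/T) ∫_0^T Z(t) dt = (1/η) ∫_{−∞}^{∞} z(t) dt`. -/
theorem stmt6 (N : ℕ) (p y : Fin N → ℝ)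
    (hp : ∀ i, p i ∈ Set.Ioo (0 : ℝ) 1) (hpsum : ∑ i, p i = 1)
    (hy : ∀ i, 0 < y i)
    (z Z : ℝ → ℝ)
    (hzdisc : DiscreteTopology {t : ℝ // ¬ ContinuousAt z t})
    (c₁ c₂ : ℝ) (hc₁ : 0 < c₁) (hc₂ : 0 < c₂)
    (hzbd : ∀ t : ℝ, |z t| ≤ c₁ * Real.exp (-c₂ * |t|))
    (hZeq : ∀ t : ℝ, Z t = z t + ∑ i, p i * Z (t - y i))
    (hZbot : Tendsto Z atBot (𝓝 0)) :
    Tendsto (fun T : ℝ => T⁻¹ * ∫ t in (0 : ℝ)..T, Z t) atTop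
      (𝓝 ((∑ i, y i * p i)⁻¹ * ∫ t : ℝ, z t)) := by
  have hp0 : ∀ i, 0 ≤ p i := fun i => (hp i).1.le
  have hZop : Z = z + renewalOp p y Z := funext hZeq
  have hzm : Measurable z := measurable_of_countable_not_continuousAt
    ((HereditarilyLindelofSpace.isLindelof _).countable hzdisc)
  have hzint : Integrable z := ((integrable_exp_neg_mul_abs hc₂).const_mul c₁).mono'
    hzm.aestronglyMeasurable (ae_of_all _ hzbd)
  have hzexp : ∀ t, |z t| ≤ c₁ * Real.exp (c₂ * t) := fun t => (hzbd t).trans <|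
    mul_le_mul_of_nonneg_left (Real.exp_le_exp.2 (by nlinarith [neg_abs_le t])) hc₁.le
  have hZint := integrableOn_Iic_of_eq_add_renewalOp hp0 hpsum hy hc₂ hc₁.le hzm hzexp hZop hZbot
  have hmain := tendsto_inv_mul_of_tendsto_sub_renewalOp hp0 hpsum hy
    (exists_abs_setIntegral_Iic_le hZint) (tendsto_setIntegral_Iic_sub_renewalOp hzint hZint hZop)
  have hinit : Tendsto (fun T : ℝ => T⁻¹ * ∫ t in Iic 0, Z t) atTop (𝓝 0) := by
    simpa using tendsto_inv_atTop_zero.mul_const (∫ t in Iic 0, Z t)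
  refine (by simpa using hmain.sub hinit : Tendsto _ _ _).congr fun T => ?_
  rw [← intervalIntegral.integral_Iic_sub_Iic (hZint 0) (hZint T), mul_sub]
end

section
/- Let F ⊆ ℝ^d be the attractor of a self-similar system S = {S_1, …, S_N}, N ≥ 2, let O be a feasible open set for S with Γ := O \ ⋃_{i=1}^N S_i(O) nonempty, and let g := sup{dist(x,F) : x ∈ Γ} < ∞. Suppose the open tiling property holds: closure(O) = closure(⋃_{w ∈ W} S_w(Γ)), where W is the set of all finite words over {1, …, N} and S_w := S_{w_1} ∘ … ∘ S_{w_n} (with S_w = Id for the empty word). Then S_w(Γ) ⊆ F_g for every w ∈ W, hence closure(O) ⊆ F_g, and consequently F_ε ∩ O = O for every ε ≥ g. -/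
open MeasureTheory Filter Set Topology

/-- For a finite word `w = w_1 … w_n` over `{1,…,N}`, `wordMap S w = S_{w_1} ∘ … ∘ S_{w_n}`
(the identity for the empty word). -/
def wordMap {d N : ℕ} (S : Fin N → Euc d → Euc d) : List (Fin N) → Euc d → Euc d
  | [] => id
  | i :: w => S i ∘ wordMap S w

/-- Let `F ⊆ ℝ^d` be the attractor of a self-similar system, `O` a
feasible open set with `Γ := O \ ⋃ S_i(O)` nonempty, `g := sup{dist(x,F) : x ∈ Γ} < ∞`.
If the open tiling property `closure O = closure (⋃_{w} S_w(Γ))` holds, then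
`S_w(Γ) ⊆ F_g` for every word `w`, hence `closure O ⊆ F_g`, and consequently
`F_ε ∩ O = O` for every `ε ≥ g`. -/
theorem stmt16 (d N : ℕ) (hN : 2 ≤ N)
    (S : Fin N → Euc d → Euc d) (r : Fin N → ℝ)
    (hr : ∀ i, r i ∈ Set.Ioo (0 : ℝ) 1)
    (hsim : ∀ i x y, dist (S i x) (S i y) = r i * dist x y)
    (F : Set (Euc d)) (hFne : F.Nonempty) (hFcomp : IsCompact F)
    (hFinv : F = ⋃ i, S i '' F)
    (O : Set (Euc d)) (hOne : O.Nonempty) (hOopen : IsOpen O)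
    (hOmap : ∀ i, S i '' O ⊆ O)
    (hOdisj : ∀ i j, i ≠ j → Disjoint (S i '' O) (S j '' O))
    (Γ : Set (Euc d)) (hΓ : Γ = O \ ⋃ i, S i '' O) (hΓne : Γ.Nonempty)
    (g : ℝ) (hg : IsLUB ((fun x => Metric.infDist x F) '' Γ) g)
    -- the open tiling property
    (htiling : closure O = closure (⋃ w : List (Fin N), wordMap S w '' Γ)) :
    (∀ w : List (Fin N), wordMap S w '' Γ ⊆ pSet F g) ∧
    closure O ⊆ pSet F g ∧
    ∀ ε : ℝ, g ≤ ε → pSet F ε ∩ O = O := by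
  -- wordMap is 1-Lipschitz
  have hlip : ∀ w : List (Fin N), ∀ x y, dist (wordMap S w x) (wordMap S w y) ≤ dist x y := by
    intro w
    induction w with
    | nil => intro x y; simp [wordMap]
    | cons i w ih =>
      intro x y
      calc dist (wordMap S (i :: w) x) (wordMap S (i :: w) y)
          = r i * dist (wordMap S w x) (wordMap S w y) := hsim i _ _
        _ ≤ 1 * dist (wordMap S w x) (wordMap S w y) := by
            apply mul_le_mul_of_nonneg_right (le_of_lt (hr i).2) dist_nonneg
        _ = dist (wordMap S w x) (wordMap S w y) := one_mul _
        _ ≤ dist x y := ih x y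
  -- wordMap maps F into F
  have hmapF : ∀ w : List (Fin N), wordMap S w '' F ⊆ F := by
    intro w
    induction w with
    | nil => simp [wordMap]
    | cons i w ih =>
      intro z hz
      obtain ⟨x, hx, rfl⟩ := hz
      have : wordMap S w x ∈ F := ih ⟨x, hx, rfl⟩
      have : S i (wordMap S w x) ∈ S i '' F := ⟨_, this, rfl⟩
      rw [hFinv]
      exact Set.mem_iUnion.2 ⟨i, this⟩
  have key : ∀ w : List (Fin N), wordMap S w '' Γ ⊆ pSet F g := by
    intro w z hz
    obtain ⟨x, hx, rfl⟩ := hz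
    have hxg : Metric.infDist x F ≤ g := hg.1 ⟨x, hx, rfl⟩
    obtain ⟨f, hf, hdf⟩ := hFcomp.exists_infDist_eq_dist hFne x
    have hfw : wordMap S w f ∈ F := hmapF w ⟨f, hf, rfl⟩
    calc Metric.infDist (wordMap S w x) F ≤ dist (wordMap S w x) (wordMap S w f) :=
          Metric.infDist_le_dist_of_mem hfw
      _ ≤ dist x f := hlip w x f
      _ = Metric.infDist x F := hdf.symm
      _ ≤ g := hxg
  have hclosed : IsClosed (pSet F g) :=
    isClosed_le (Metric.continuous_infDist_pt F) continuous_const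
  have hcl : closure O ⊆ pSet F g := by
    rw [htiling]
    apply closure_minimal _ hclosed
    exact Set.iUnion_subset key
  refine ⟨key, hcl, ?_⟩
  intro ε hε
  apply Set.inter_eq_self_of_subset_right
  intro x hx
  have : Metric.infDist x F ≤ g := hcl (subset_closure hx)
  exact le_trans this hε
end
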